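/- arXiv:alg-geom/9410019 — 3 statements merged into one kernel-verified Lean document; each statement's English description precedes it below -/
import Mathlib

section
/- Every coefficient φ_k of the formal power series Φ lies in the subring ℚ[α,β,γ] of K = ℚ(α,β,γ) (i.e. the apparent denominator β cancels); in particular, for every integer g ≥ 1 the elements f_1^g, f_2^g, f_3^g are polynomials in α, β, γ. -/
noncomputable section

open PowerSeries

/-- The polynomial ring `ℚ[α,β,γ]`. -/
abbrev R3 : Type := MvPolynomial (Fin 3) ℚ

/-- The fraction field `K = ℚ(α,β,γ)`. -/
abbrev K3 : Type := FractionRing R3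

/-- The image of `α` in `K`. -/
def al : K3 := algebraMap R3 K3 (MvPolynomial.X 0)
/-- The image of `β` in `K`. -/
def be : K3 := algebraMap R3 K3 (MvPolynomial.X 1)
/-- The image of `γ` in `K`. -/
def ga : K3 := algebraMap R3 K3 (MvPolynomial.X 2)

/-- The binomial series `(1 - β t²)^{-1/2} = ∑_{n≥0} C(2n,n) (β t²/4)^n`. -/
def Sq : PowerSeries K3 :=
  PowerSeries.mk fun k => if k % 2 = 0 then
    ((k.choose (k / 2) : ℚ) : K3) * (be / 4) ^ (k / 2) else 0

/-- The exponent `E(t) = α t + (α + 2γ/β) ∑_{m≥1} β^m t^{2m+1}/(2m+1)`;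
its coefficient in degree `k = 2m+1 ≥ 3` is `(α + 2γ/β) β^{(k-1)/2} / k`. -/
def Ex : PowerSeries K3 :=
  PowerSeries.mk fun k =>
    if k = 1 then al
    else if k % 2 = 1 then (al + 2 * ga / be) * be ^ ((k - 1) / 2) / (k : K3)
    else 0

/-- The formal exponential `exp E = ∑_n E^n/n!` of the power series `E`
(which has zero constant term, so each coefficient is a finite sum). -/
def ExpEx : PowerSeries K3 :=
  PowerSeries.mk fun k =>
    ∑ n ∈ Finset.range (k + 1), PowerSeries.coeff k (Ex ^ n) / (n.factorial : K3)

/-- The generating function `Φ(t) = (1 - βt²)^{-1/2} exp(E(t))`. -/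
def Phi : PowerSeries K3 := Sq * ExpEx

/-- `φ_k`, the `k`-th coefficient of `Φ`. -/
def phi (k : ℕ) : K3 := PowerSeries.coeff k Phi

/-- `Φ^{(r)} = r! φ_r`, the `r`-th formal derivative of `Φ` at `t = 0`. -/
def PhiD (r : ℕ) : K3 := (r.factorial : K3) * phi r

/-- `f_1^g := Φ^{(g)}`. -/
def f1 (g : ℕ) : K3 := PhiD g
/-- `f_2^g := (1/g²)(Φ^{(g+1)} - α Φ^{(g)})`. -/
def f2 (g : ℕ) : K3 := (1 / (g : K3) ^ 2) * (PhiD (g + 1) - al * PhiD g)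
/-- `f_3^g := (1/(2g(g+1)))(Φ^{(g+2)} - α Φ^{(g+1)} - (g+1)² β Φ^{(g)})`. -/
def f3 (g : ℕ) : K3 :=
  (1 / (2 * (g : K3) * ((g : K3) + 1))) *
    (PhiD (g + 2) - al * PhiD (g + 1) - ((g : K3) + 1) ^ 2 * be * PhiD g)


/-- Inverses of natural numbers lie in the image of `ℚ[α,β,γ]`. -/
lemma inv_nat_mem (k : ℕ) : ((k : K3))⁻¹ ∈ (algebraMap R3 K3).range := by
  rcases eq_or_ne k 0 with rfl | hk
  · simp
  · refine ⟨MvPolynomial.C ((k : ℚ))⁻¹, ?_⟩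
    have hk' : ((k : ℚ)) ≠ 0 := by exact_mod_cast hk
    apply eq_inv_of_mul_eq_one_left
    have : (MvPolynomial.C ((k : ℚ))⁻¹ : R3) * (k : R3) = 1 := by
      rw [show ((k : R3)) = MvPolynomial.C ((k : ℚ)) from (map_natCast MvPolynomial.C k).symm,
        ← map_mul, inv_mul_cancel₀ hk', map_one]
    calc (algebraMap R3 K3) (MvPolynomial.C ((k : ℚ))⁻¹) * (k : K3)
        = (algebraMap R3 K3) ((MvPolynomial.C ((k : ℚ))⁻¹ : R3) * (k : R3)) := by
          rw [map_mul, map_natCast]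
      _ = 1 := by rw [this, map_one]

lemma be_ne_zero : be ≠ 0 := by
  intro h
  have := (IsFractionRing.injective R3 K3) (show (algebraMap R3 K3) (MvPolynomial.X 1) = algebraMap R3 K3 0 by
    rw [map_zero]; exact h)
  exact MvPolynomial.X_ne_zero 1 this

lemma al_mem : al ∈ (algebraMap R3 K3).range := ⟨MvPolynomial.X 0, rfl⟩
lemma be_mem : be ∈ (algebraMap R3 K3).range := ⟨MvPolynomial.X 1, rfl⟩
lemma ga_mem : ga ∈ (algebraMap R3 K3).range := ⟨MvPolynomial.X 2, rfl⟩

lemma coeff_Sq_mem (k : ℕ) : PowerSeries.coeff k Sq ∈ (algebraMap R3 K3).range := by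
  rw [Sq, PowerSeries.coeff_mk]
  split
  · refine mul_mem ?_ (pow_mem ?_ _)
    · rw [Rat.cast_natCast]
      exact natCast_mem _ _
    · rw [div_eq_mul_inv]
      exact mul_mem be_mem (by simpa using inv_nat_mem 4)
  · exact zero_mem _

lemma coeff_Ex_mem (k : ℕ) : PowerSeries.coeff k Ex ∈ (algebraMap R3 K3).range := by
  rw [Ex, PowerSeries.coeff_mk]
  split
  · exact al_mem
  · split
    · rename_i h1 h2
      have hk3 : 3 ≤ k := by omega
      have hm : 1 ≤ (k - 1) / 2 := by omega
      have key : (al + 2 * ga / be) * be ^ ((k - 1) / 2)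
          = al * be ^ ((k - 1) / 2) + 2 * ga * be ^ ((k - 1) / 2 - 1) := by
        have hpow : be ^ ((k - 1) / 2) = be ^ ((k - 1) / 2 - 1) * be := by
          rw [← pow_succ]
          congr 1
          omega
        rw [hpow]
        field_simp [be_ne_zero]
      rw [div_eq_mul_inv, key]
      refine mul_mem (add_mem (mul_mem al_mem (pow_mem be_mem _))
        (mul_mem (mul_mem ?_ ga_mem) (pow_mem be_mem _))) (inv_nat_mem k)
      exact natCast_mem _ 2
    · exact zero_mem _

lemma coeff_pow_Ex_mem (n k : ℕ) :
    PowerSeries.coeff k (Ex ^ n) ∈ (algebraMap R3 K3).range := by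
  induction n generalizing k with
  | zero =>
    rw [pow_zero, PowerSeries.coeff_one]
    split
    · exact one_mem _
    · exact zero_mem _
  | succ n ih =>
    rw [pow_succ, PowerSeries.coeff_mul]
    exact Subring.sum_mem _ fun p _ => mul_mem (ih _) (coeff_Ex_mem _)

lemma coeff_ExpEx_mem (k : ℕ) :
    PowerSeries.coeff k ExpEx ∈ (algebraMap R3 K3).range := by
  rw [ExpEx, PowerSeries.coeff_mk]
  refine Subring.sum_mem _ fun n _ => ?_
  rw [div_eq_mul_inv]
  exact mul_mem (coeff_pow_Ex_mem _ _) (inv_nat_mem _)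

lemma phi_mem (k : ℕ) : phi k ∈ (algebraMap R3 K3).range := by
  rw [phi, Phi, PowerSeries.coeff_mul]
  exact Subring.sum_mem _ fun p _ => mul_mem (coeff_Sq_mem _) (coeff_ExpEx_mem _)

lemma PhiD_mem (r : ℕ) : PhiD r ∈ (algebraMap R3 K3).range :=
  mul_mem (natCast_mem _ _) (phi_mem r)

/-- Every coefficient `φ_k` of `Φ` lies in the subring `ℚ[α,β,γ]` of
`K = ℚ(α,β,γ)`; in particular for every `g ≥ 1` the elements
`f_1^g, f_2^g, f_3^g` are polynomials in `α, β, γ`. -/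
theorem statement0 :
    (∀ k : ℕ, phi k ∈ (algebraMap R3 K3).range) ∧
    ∀ g : ℕ, 1 ≤ g →
      f1 g ∈ (algebraMap R3 K3).range ∧ f2 g ∈ (algebraMap R3 K3).range ∧
        f3 g ∈ (algebraMap R3 K3).range := by
  refine ⟨phi_mem, fun g hg => ?_⟩
  refine ⟨PhiD_mem g, ?_, ?_⟩
  · rw [f2, one_div]
    refine mul_mem ?_ (sub_mem (PhiD_mem _) (mul_mem al_mem (PhiD_mem _)))
    have : ((g : K3)) ^ 2 = ((g ^ 2 : ℕ) : K3) := by push_cast; ring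
    rw [this]
    exact inv_nat_mem _
  · rw [f3, one_div]
    refine mul_mem ?_ (sub_mem (sub_mem (PhiD_mem _) (mul_mem al_mem (PhiD_mem _)))
      (mul_mem (mul_mem ?_ be_mem) (PhiD_mem _)))
    · have : (2 * (g : K3) * ((g : K3) + 1)) = ((2 * g * (g + 1) : ℕ) : K3) := by
        push_cast; ring
      rw [this]
      exact inv_nat_mem _
    · have : ((g : K3) + 1) ^ 2 = (((g + 1) ^ 2 : ℕ) : K3) := by push_cast; ring
      rw [this]
      exact natCast_mem _ _
end
end

section
/- The power series Φ satisfies the formal differential equation (1 − β t²)·Φ′(t) = (α + β t + 2γ t²)·Φ(t) in K[[t]], where Φ′ denotes the formal derivative with respect to t. -/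
noncomputable section

open PowerSeries

set_option maxHeartbeats 1000000

lemma coeff_Ex_zero : PowerSeries.coeff 0 Ex = 0 := by simp [Ex]

lemma coeff_Ex_pow_zero : ∀ n k : ℕ, k < n → PowerSeries.coeff k (Ex ^ n) = 0 := by
  intro n
  induction n with
  | zero => omega
  | succ n ih =>
    intro k hk
    rw [pow_succ', coeff_mul]
    apply Finset.sum_eq_zero
    rintro ⟨i, j⟩ hij
    rw [Finset.HasAntidiagonal.mem_antidiagonal] at hij
    rcases Nat.eq_zero_or_pos i with hi | hi
    · subst hi; simp [coeff_Ex_zero]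
    · rw [ih j (by omega), mul_zero]

lemma ex_deriv : (1 - PowerSeries.C be * PowerSeries.X ^ 2) * (d⁄dX K3 Ex) =
    PowerSeries.C al + PowerSeries.C (2 * ga) * PowerSeries.X ^ 2 := by
  have key : ∀ f : PowerSeries K3,
      (1 - PowerSeries.C be * PowerSeries.X ^ 2) * f
        = f - PowerSeries.C be * (f * PowerSeries.X ^ 2) := by intro f; ring
  rw [key]
  ext k
  rw [map_sub, coeff_C_mul, coeff_mul_X_pow']
  simp only [coeff_derivative]
  rw [map_add, coeff_C, coeff_C_mul, coeff_X_pow]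
  rcases Nat.even_or_odd' k with ⟨m, hm | hm⟩
  · subst hm
    match m with
    | 0 => simp [Ex, al]
    | 1 =>
      norm_num [Ex, coeff_mk]
      rw [add_mul, div_mul_cancel₀ _ be_ne_zero]
      ring
    | (m+2) =>
      simp only [coeff_derivative, Ex, coeff_mk]
      have h1 : 2 * (m + 2) + 1 ≠ 1 := by omega
      have h2 : (2 * (m + 2) + 1) % 2 = 1 := by omega
      have h3 : 2 ≤ 2 * (m + 2) := by omega
      have h4 : 2 * (m + 2) - 2 + 1 = 2 * (m + 1) + 1 := by omega
      have h5 : 2 * (m + 1) + 1 ≠ 1 := by omega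
      have h6 : (2 * (m + 1) + 1) % 2 = 1 := by omega
      have h7 : (2 * (m + 2) + 1 - 1) / 2 = m + 2 := by omega
      have h8 : (2 * (m + 1) + 1 - 1) / 2 = m + 1 := by omega
      have e : 2 * (m + 2) - 2 = 2 * m + 2 := by omega
      rw [h4, if_neg h1, if_pos h2, if_neg h5, if_pos h6, h7, h8, if_pos h3,
        if_neg (by omega : ¬ 2 * (m+2) = 0), if_neg (by omega : ¬ 2 * (m+2) = 2), e]
      have c1 : ((2*(m+2):ℕ):K3) + 1 = ((2*(m+2)+1 : ℕ):K3) := by push_cast; ring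
      have c2 : ((2*m+2:ℕ):K3) + 1 = ((2*(m+1)+1 : ℕ):K3) := by push_cast; ring
      rw [c1, c2, div_mul_cancel₀ _ (Nat.cast_ne_zero.mpr (by omega : 2*(m+2)+1 ≠ 0)),
        div_mul_cancel₀ _ (Nat.cast_ne_zero.mpr (by omega : 2*(m+1)+1 ≠ 0))]
      ring
  · subst hm
    match m with
    | 0 => simp [Ex]
    | (m+1) =>
      simp only [Ex, coeff_mk]
      rw [if_neg (by omega : ¬ 2*(m+1)+1+1 = 1), if_neg (by omega : (2*(m+1)+1+1) % 2 ≠ 1),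
        if_pos (by omega : 2 ≤ 2*(m+1)+1), if_neg (by omega : ¬ 2*(m+1)+1-2+1 = 1),
        if_neg (by omega : (2*(m+1)+1-2+1) % 2 ≠ 1),
        if_neg (by omega : ¬ 2*(m+1)+1 = 0), if_neg (by omega : ¬ 2*(m+1)+1 = 2)]
      ring

lemma sq_deriv : (1 - PowerSeries.C be * PowerSeries.X ^ 2) * (d⁄dX K3 Sq) =
    PowerSeries.C be * PowerSeries.X * Sq := by
  have key : ∀ f : PowerSeries K3,
      (1 - PowerSeries.C be * PowerSeries.X ^ 2) * f
        = f - PowerSeries.C be * (f * PowerSeries.X ^ 2) := by intro f; ring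
  have key2 : PowerSeries.C be * PowerSeries.X * Sq
      = PowerSeries.C be * (Sq * PowerSeries.X ^ 1) := by ring
  rw [key, key2]
  ext k
  rw [map_sub, coeff_C_mul, coeff_mul_X_pow', coeff_C_mul, coeff_mul_X_pow']
  simp only [coeff_derivative]
  rcases Nat.even_or_odd' k with ⟨m, hm | hm⟩
  · subst hm
    match m with
    | 0 => simp [Sq]
    | (m+1) =>
      simp only [Sq, coeff_mk]
      rw [if_neg (by omega : ¬ (2*(m+1)+1) % 2 = 0),
        if_pos (by omega : 2 ≤ 2*(m+1)),
        if_neg (by omega : ¬ (2*(m+1)-2+1) % 2 = 0),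
        if_pos (by omega : 1 ≤ 2*(m+1)),
        if_neg (by omega : ¬ (2*(m+1)-1) % 2 = 0)]
      ring
  · subst hm
    match m with
    | 0 =>
      norm_num [Sq, coeff_mk]
      ring
    | (m+1) =>
      simp only [Sq, coeff_mk]
      rw [if_pos (by omega : (2*(m+1)+1+1) % 2 = 0),
        if_pos (by omega : 2 ≤ 2*(m+1)+1),
        if_pos (by omega : (2*(m+1)+1-2+1) % 2 = 0),
        if_pos (by omega : 1 ≤ 2*(m+1)+1),
        if_pos (by omega : (2*(m+1)+1-1) % 2 = 0),
        (by omega : (2*(m+1)+1+1) / 2 = m+2),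
        (by omega : 2*(m+1)+1+1 = 2*m+4),
        (by omega : 2*(m+1)+1-2+1 = 2*m+2),
        (by omega : 2*(m+1)+1-2 = 2*m+1),
        (by omega : 2*(m+1)+1-1 = 2*m+2)]
      simp only [show (2*m+2) / 2 = m+1 from by omega]
      have hnat : (2*m+4) * Nat.choose (2*m+4) (m+2) = 4*(2*m+3) * Nat.choose (2*m+2) (m+1) := by
        have h := Nat.succ_mul_centralBinom_succ (m+1)
        unfold Nat.centralBinom at h
        rw [show 2*(m+1+1) = 2*m+4 from by ring, show m+1+1 = m+2 from rfl,
          show 2*(m+1) = 2*m+2 from by ring] at h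
        nlinarith [h]
      have hK : ((2*m+4 : ℕ) : K3) * ((Nat.choose (2*m+4) (m+2) : ℕ) : K3)
          = ((4*(2*m+3) : ℕ) : K3) * ((Nat.choose (2*m+2) (m+1) : ℕ) : K3) := by
        exact_mod_cast congrArg (Nat.cast : ℕ → K3) hnat
      push_cast at hK ⊢
      linear_combination ((be/4)^(m+1) * (be/4)) * hK

lemma expEx_deriv : d⁄dX K3 ExpEx = d⁄dX K3 Ex * ExpEx := by
  ext k
  rw [coeff_derivative, coeff_mul]
  simp only [ExpEx, coeff_mk]
  rw [Finset.sum_mul, Finset.sum_range_succ']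
  have hzero : PowerSeries.coeff (k+1) (Ex ^ 0) / (Nat.factorial 0 : K3) * ((k:K3)+1) = 0 := by
    simp
  rw [hzero, add_zero]
  have hterm : ∀ m, PowerSeries.coeff (k+1) (Ex ^ (m+1)) / ((m+1).factorial : K3) * ((k:K3)+1)
      = PowerSeries.coeff k (Ex ^ m * d⁄dX K3 Ex) / (m.factorial : K3) := by
    intro m
    have h := congrArg (PowerSeries.coeff k) (Derivation.leibniz_pow (d⁄dX K3) Ex (m+1))
    rw [coeff_derivative] at h
    simp only [Nat.add_sub_cancel, smul_eq_mul, map_nsmul, nsmul_eq_mul] at h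
    rw [← map_natCast (PowerSeries.C (R := K3)) (m+1), coeff_C_mul] at h
    rw [div_mul_eq_mul_div, h, Nat.factorial_succ]
    push_cast
    rw [mul_div_mul_left _ _ (Nat.cast_add_one_ne_zero m)]
  rw [Finset.sum_congr rfl (fun m _ => hterm m)]
  have hext : ∀ p ∈ Finset.HasAntidiagonal.antidiagonal k,
      PowerSeries.coeff p.1 (d⁄dX K3 Ex) *
        ∑ n ∈ Finset.range (p.2 + 1), PowerSeries.coeff p.2 (Ex ^ n) / (n.factorial : K3)
      = ∑ n ∈ Finset.range (k + 1),
          PowerSeries.coeff p.1 (d⁄dX K3 Ex) *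
            (PowerSeries.coeff p.2 (Ex ^ n) / (n.factorial : K3)) := by
    intro p hp
    rw [Finset.HasAntidiagonal.mem_antidiagonal] at hp
    rw [Finset.mul_sum]
    apply Finset.sum_subset (Finset.range_subset_range.mpr (by omega))
    intro n _ hn
    rw [coeff_Ex_pow_zero n p.2 (by simp only [Finset.mem_range] at hn; omega), zero_div, mul_zero]
  rw [Finset.sum_congr rfl hext, Finset.sum_comm]
  apply Finset.sum_congr rfl
  intro n _
  rw [mul_comm (Ex ^ n) (d⁄dX K3 Ex), coeff_mul, Finset.sum_div]
  exact Finset.sum_congr rfl fun p _ => mul_div_assoc _ _ _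

/-- The power series `Φ` satisfies the formal differential equation
`(1 - β t²) Φ'(t) = (α + β t + 2 γ t²) Φ(t)` in `K⟦t⟧`. -/
theorem statement1 :
    (1 - PowerSeries.C be * PowerSeries.X ^ 2) * (d⁄dX K3 Phi) =
      (PowerSeries.C al + PowerSeries.C be * PowerSeries.X +
        PowerSeries.C (2 * ga) * PowerSeries.X ^ 2) * Phi := by
  have hSq := sq_deriv
  have hEx := ex_deriv
  rw [Phi, Derivation.leibniz, smul_eq_mul, smul_eq_mul, expEx_deriv]
  linear_combination ExpEx * hSq + Sq * ExpEx * hEx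
end
end

section
/- Let M ≥ 1 be an integer and let λ_1,…,λ_M be complex numbers satisfying Σ_{κ=1}^M λ_κ = 1 and Σ_{κ=1}^M λ_κ^k = 0 for every integer k with 2 ≤ k ≤ M. Then for every integer k with 0 ≤ k ≤ M, the elementary symmetric polynomial σ_k(λ_1,…,λ_M) = 1/k!. -/
noncomputable section

open Finset MvPolynomial

/-- If `λ_1,…,λ_M ∈ ℂ` satisfy `∑_κ λ_κ = 1` and `∑_κ λ_κ^k = 0` for all
`2 ≤ k ≤ M`, then for every `0 ≤ k ≤ M` the `k`-th elementary symmetric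
polynomial of the `λ_κ` equals `1/k!`. -/
theorem statement15 (M : ℕ) (hM : 1 ≤ M) (lam : Fin M → ℂ)
    (h1 : ∑ κ, lam κ = 1)
    (h2 : ∀ k : ℕ, 2 ≤ k → k ≤ M → ∑ κ, lam κ ^ k = 0) :
    ∀ k : ℕ, k ≤ M →
      ∑ s ∈ Finset.powersetCard k (Finset.univ : Finset (Fin M)),
          ∏ i ∈ s, lam i = 1 / (k.factorial : ℂ) := by
  set e : ℕ → ℂ := fun k => ∑ s ∈ Finset.powersetCard k (Finset.univ : Finset (Fin M)),
      ∏ i ∈ s, lam i with he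
  have heval : ∀ k, eval lam (esymm (Fin M) ℂ k) = e k := by
    intro k
    simp [esymm, eval_sum, he]
  have hpsum : ∀ k, eval lam (psum (Fin M) ℂ k) = ∑ κ, lam κ ^ k := by
    intro k
    simp [psum, eval_sum]
  have newton : ∀ k : ℕ, (k : ℂ) * e k =
      (-1) ^ (k + 1) * ∑ a ∈ antidiagonal k with a.1 < k,
        (-1) ^ a.1 * e a.1 * (∑ κ, lam κ ^ a.2) := by
    intro k
    have := congrArg (eval lam) (mul_esymm_eq_sum (Fin M) ℂ k)
    simpa [eval_mul, eval_sum, eval_pow, heval, hpsum] using this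
  have key : ∀ k : ℕ, 1 ≤ k → k ≤ M → (k : ℂ) * e k = e (k - 1) := by
    intro k hk hkM
    rw [newton k]
    have hsum : ∑ a ∈ antidiagonal k with a.1 < k,
        (-1 : ℂ) ^ a.1 * e a.1 * (∑ κ, lam κ ^ a.2) =
        (-1) ^ (k - 1) * e (k - 1) * 1 := by
      rw [Finset.sum_eq_single (k - 1, 1)]
      · simp only [pow_one, h1]
      · rintro ⟨i, j⟩ hmem hne
        simp only [Finset.mem_filter, Finset.HasAntidiagonal.mem_antidiagonal] at hmem
        obtain ⟨hij, hik⟩ := hmem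
        have hj2 : 2 ≤ j := by
          rcases Nat.lt_or_ge j 2 with hj | hj
          · interval_cases j
            · omega
            · exfalso; apply hne; simp; omega
          · exact hj
        rw [h2 j hj2 (by omega), mul_zero]
      · intro h
        exfalso; apply h
        simp only [Finset.mem_filter, Finset.HasAntidiagonal.mem_antidiagonal]
        omega
    rw [hsum, mul_one, ← mul_assoc, ← pow_add]
    have : (-1 : ℂ) ^ (k + 1 + (k - 1)) = 1 := by
      have : k + 1 + (k - 1) = 2 * k := by omega
      rw [this, pow_mul]; norm_num
    rw [this, one_mul]
  intro k hkM
  induction k with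
  | zero => simp [he]
  | succ n ih =>
    have hn : e n = 1 / (n.factorial : ℂ) := ih (by omega)
    have hk := key (n + 1) (by omega) hkM
    simp only [Nat.add_sub_cancel] at hk
    have hfac : ((n.factorial : ℂ)) ≠ 0 := by exact_mod_cast Nat.factorial_ne_zero n
    have hne : ((n + 1 : ℕ) : ℂ) ≠ 0 := by exact_mod_cast Nat.succ_ne_zero n
    rw [hn, eq_div_iff hfac] at hk
    rw [Nat.factorial_succ, eq_div_iff (by push_cast at hne ⊢; exact mul_ne_zero hne hfac)]
    push_cast at hk ⊢
    linear_combination hk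
end
end
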